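/- (General mean bound, Eq. (GeneralMeanBound).) For every Hermitian operator G on ℂ^n ⊗ ℂ^n ⊗ ℂ^M and every g_max ≥ 0 with ‖G x‖ ≤ g_max ‖x‖ for all x, the expectation ⟨G⟩ in the final pure state Ψ_T satisfies Q_G − √(g_max² · Ξ) ≤ ⟨G⟩ ≤ Q_G + √(g_max² · Ξ), where Q_G = Re⟨Ψ̃_0, G Ψ_T⟩ is the no-cost baseline and Ξ = Tr[ρ (V_0† V_0)^{−1}] − 1 is the survival activity. -/

import Mathlib

open Matrix Kronecker Finset

noncomputable section

/-- Tensor product of two vectors. -/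
def tvec {α β : Type*} (x : α → ℂ) (y : β → ℂ) : α × β → ℂ :=
  fun q => x q.1 * y q.2

/-- Standard basis vector `f_m` of the environment `ℂ^(M+1)`. -/
def stdv (M : ℕ) (m : Fin (M + 1)) : Fin (M + 1) → ℂ :=
  fun k => if k = m then 1 else 0

variable {n M : ℕ}

/-- The final pure state `Ψ_T = ∑_{i,m} √p_i ψ_i ⊗ (V_m ψ_i) ⊗ f_m` of R+S+E. -/
def PsiT (ψ : Fin n → Fin n → ℂ) (p : Fin n → ℝ)
    (V : Fin (M + 1) → Matrix (Fin n) (Fin n) ℂ) :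
    (Fin n × Fin n) × Fin (M + 1) → ℂ :=
  ∑ i, ∑ m, ((Real.sqrt (p i) : ℂ) • tvec (tvec (ψ i) (V m *ᵥ ψ i)) (stdv M m))

/-- The unnormalized vector `Ψ̃_0 = ∑_i √p_i ψ_i ⊗ ((V_0†)⁻¹ ψ_i) ⊗ f_0`. -/
def PsiTilde0 (ψ : Fin n → Fin n → ℂ) (p : Fin n → ℝ)
    (V : Fin (M + 1) → Matrix (Fin n) (Fin n) ℂ) :
    (Fin n × Fin n) × Fin (M + 1) → ℂ :=
  ∑ i, ((Real.sqrt (p i) : ℂ) • tvec (tvec (ψ i) ((((V 0)ᴴ)⁻¹) *ᵥ ψ i)) (stdv M 0))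

/-- The initial density matrix `ρ = ∑_i p_i ψ_i ψ_i†` of the principal system S. -/
def rho (ψ : Fin n → Fin n → ℂ) (p : Fin n → ℝ) : Matrix (Fin n) (Fin n) ℂ :=
  ∑ i, ((p i : ℂ) • vecMulVec (ψ i) (star (ψ i)))

/-- Expectation value `⟨G⟩ = ⟨Ψ, G Ψ⟩` (its real part, which is all of it for Hermitian `G`). -/
def expval {ι : Type*} [Fintype ι] (G : Matrix ι ι ℂ) (Ψ : ι → ℂ) : ℝ :=
  (star Ψ ⬝ᵥ (G *ᵥ Ψ)).re

/-- Variance `Var[G] = ⟨Ψ, G² Ψ⟩ − ⟨G⟩²`. -/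
def variance {ι : Type*} [Fintype ι] (G : Matrix ι ι ℂ) (Ψ : ι → ℂ) : ℝ :=
  expval (G * G) Ψ - (expval G Ψ) ^ 2

/-- The survival activity `Ξ = Tr[ρ (V_0† V_0)⁻¹] − 1`. -/
def survivalActivity (ψ : Fin n → Fin n → ℂ) (p : Fin n → ℝ)
    (V : Fin (M + 1) → Matrix (Fin n) (Fin n) ℂ) : ℝ :=
  ((rho ψ p * ((V 0)ᴴ * V 0)⁻¹).trace).re - 1


/-- The no-cost baseline `Q_G = Re⟨Ψ̃_0, G Ψ_T⟩`. -/
def noCostBaseline (ψ : Fin n → Fin n → ℂ) (p : Fin n → ℝ)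
    (V : Fin (M + 1) → Matrix (Fin n) (Fin n) ℂ)
    (G : Matrix ((Fin n × Fin n) × Fin (M + 1)) ((Fin n × Fin n) × Fin (M + 1)) ℂ) : ℝ :=
  (star (PsiTilde0 ψ p V) ⬝ᵥ (G *ᵥ PsiT ψ p V)).re

/-!
`Ψ_T` and `Ψ̃_0` are sums of mutually orthogonal branches `ψ_i ⊗ v ⊗ f_m`, so their inner
products are traces against `ρ`: `⟨Ψ_T, Ψ_T⟩ = Tr ρ ∑ V_m† V_m = 1`,
`⟨Ψ̃_0, Ψ_T⟩ = Tr ρ V_0⁻¹ V_0 = 1` and `⟨Ψ̃_0, Ψ̃_0⟩ = Tr ρ (V_0† V_0)⁻¹`. Hence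
`‖Ψ_T - Ψ̃_0‖² = Ξ`, and `⟨G⟩ - Q_G = Re ⟨Ψ_T - Ψ̃_0, G Ψ_T⟩` is at most `g_max √Ξ` in absolute
value by Cauchy–Schwarz.
-/

section InnerProductSpace

variable {𝕜 E : Type*} [RCLike 𝕜] [NormedAddCommGroup E] [InnerProductSpace 𝕜 E]

open RCLike InnerProductSpace

lemma norm_sub_sq_eq_of_re_inner_eq_one {Φ Φ₀ : E} (hΦ : ‖Φ‖ = 1)
    (hΦ₀ : re ⟪Φ₀, Φ⟫_𝕜 = 1) : ‖Φ - Φ₀‖ ^ 2 = ‖Φ₀‖ ^ 2 - 1 := by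
  rw [@norm_sub_sq 𝕜, hΦ, inner_re_symm, hΦ₀]
  ring

lemma abs_re_inner_sub_re_inner_le {Φ Φ₀ w : E} {g : ℝ} (hΦ : ‖Φ‖ = 1)
    (hΦ₀ : re ⟪Φ₀, Φ⟫_𝕜 = 1) (hw : ‖w‖ ≤ g) :
    |re ⟪Φ, w⟫_𝕜 - re ⟪Φ₀, w⟫_𝕜| ≤ √(g ^ 2 * (‖Φ₀‖ ^ 2 - 1)) := by
  rw [← norm_sub_sq_eq_of_re_inner_eq_one hΦ hΦ₀, Real.sqrt_mul (sq_nonneg g),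
    Real.sqrt_sq ((norm_nonneg w).trans hw), Real.sqrt_sq (norm_nonneg _), ← map_sub,
    ← inner_sub_left]
  calc |re ⟪Φ - Φ₀, w⟫_𝕜| ≤ ‖⟪Φ - Φ₀, w⟫_𝕜‖ := abs_re_le_norm _
    _ ≤ ‖Φ - Φ₀‖ * ‖w‖ := norm_inner_le_norm _ _
    _ ≤ g * ‖Φ - Φ₀‖ := by rw [mul_comm]; gcongr

end InnerProductSpace

section EuclideanSpace

variable {𝕜 ι : Type*} [RCLike 𝕜] [Fintype ι]

lemma EuclideanSpace.inner_toLp_toLp_eq_star_dotProduct (x y : ι → 𝕜) :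
    inner 𝕜 (WithLp.toLp 2 x) (WithLp.toLp 2 y) = star x ⬝ᵥ y := by
  rw [EuclideanSpace.inner_toLp_toLp, dotProduct_comm]

lemma EuclideanSpace.norm_toLp (x : ι → 𝕜) : ‖WithLp.toLp 2 x‖ = √(∑ i, ‖x i‖ ^ 2) := by
  simp [EuclideanSpace.norm_eq]

lemma EuclideanSpace.norm_toLp_sq (x : ι → 𝕜) :
    ‖WithLp.toLp 2 x‖ ^ 2 = RCLike.re (star x ⬝ᵥ x) := by
  rw [@norm_sq_eq_re_inner 𝕜, inner_toLp_toLp_eq_star_dotProduct]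

end EuclideanSpace

section Tensor

variable {ι κ α β γ : Type*} [Fintype ι] [Fintype κ] [Fintype α] [Fintype β] [Fintype γ]

lemma star_tvec_dotProduct_tvec (x x' : α → ℂ) (y y' : β → ℂ) :
    star (tvec x y) ⬝ᵥ tvec x' y' = (star x ⬝ᵥ x') * (star y ⬝ᵥ y') := by
  simp only [dotProduct, tvec, Pi.star_apply, star_mul', Fintype.sum_prod_type, sum_mul_sum]
  exact sum_congr rfl fun _ _ => sum_congr rfl fun _ _ => by ring

lemma star_stdv_dotProduct_stdv (m m' : Fin (M + 1)) :
    star (stdv M m) ⬝ᵥ stdv M m' = if m = m' then 1 else 0 := by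
  simp [stdv, dotProduct, eq_comm]

lemma star_sum_tvec_dotProduct_sum_tvec [DecidableEq ι] [DecidableEq κ]
    {ψ : ι → α → ℂ} {f : κ → β → ℂ}
    (hψ : ∀ i j, star (ψ i) ⬝ᵥ ψ j = if i = j then 1 else 0)
    (hf : ∀ m m', star (f m) ⬝ᵥ f m' = if m = m' then 1 else 0)
    (c c' : ι → κ → ℂ) (a b : ι → κ → γ → ℂ) :
    star (∑ i, ∑ m, c i m • tvec (tvec (ψ i) (a i m)) (f m)) ⬝ᵥ
        (∑ i, ∑ m, c' i m • tvec (tvec (ψ i) (b i m)) (f m)) =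
      ∑ i, ∑ m, star (c i m) * c' i m * (star (a i m) ⬝ᵥ b i m) := by
  simp only [star_sum, star_smul, sum_dotProduct, dotProduct_sum, smul_dotProduct,
    dotProduct_smul, star_tvec_dotProduct_tvec, hψ, hf, smul_eq_mul, mul_ite, ite_mul, mul_one,
    mul_zero, zero_mul, sum_ite_eq', mem_univ, if_true]
  exact sum_congr rfl fun _ _ => sum_congr rfl fun _ _ => by ring

end Tensor

section States

variable {ψ : Fin n → Fin n → ℂ} {p : Fin n → ℝ}

lemma trace_rho_eq_one (hortho : ∀ i j, star (ψ i) ⬝ᵥ ψ j = if i = j then (1 : ℂ) else 0)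
    (hp1 : ∑ i, p i = 1) : (rho ψ p).trace = 1 := by
  simp [rho, trace_sum, dotProduct_comm (ψ _), hortho, ← Complex.ofReal_sum, hp1]

lemma trace_rho_mul_conjTranspose_mul (hp : ∀ i, 0 ≤ p i) (A B : Matrix (Fin n) (Fin n) ℂ) :
    (rho ψ p * (Aᴴ * B)).trace =
      ∑ i, star (√(p i) : ℂ) * √(p i) * (star (A *ᵥ ψ i) ⬝ᵥ (B *ᵥ ψ i)) := by
  simp only [rho, sum_mul, trace_sum, smul_mul, trace_smul, vecMulVec_mul,
    trace_vecMulVec]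
  refine sum_congr rfl fun i _ => ?_
  rw [star_mulVec, dotProduct_mulVec, vecMul_vecMul, dotProduct_comm (ψ i), Complex.star_def,
    Complex.conj_ofReal, ← Complex.ofReal_mul, Real.mul_self_sqrt (hp i), smul_eq_mul]

variable {V : Fin (M + 1) → Matrix (Fin n) (Fin n) ℂ}

lemma psiTilde0_eq_sum_sum : PsiTilde0 ψ p V = ∑ i, ∑ m,
    (if m = 0 then (√(p i) : ℂ) else 0) • tvec (tvec (ψ i) ((V 0)ᴴ⁻¹ *ᵥ ψ i)) (stdv M m) := by
  simp [PsiTilde0, ite_smul]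

lemma star_psiT_dotProduct_psiT
    (hortho : ∀ i j, star (ψ i) ⬝ᵥ ψ j = if i = j then (1 : ℂ) else 0)
    (hp : ∀ i, 0 ≤ p i) (hp1 : ∑ i, p i = 1) (hKraus : ∑ m, (V m)ᴴ * V m = 1) :
    star (PsiT ψ p V) ⬝ᵥ PsiT ψ p V = 1 := by
  rw [PsiT, star_sum_tvec_dotProduct_sum_tvec hortho star_stdv_dotProduct_stdv, sum_comm]
  simp_rw [← trace_rho_mul_conjTranspose_mul hp]
  rw [← trace_sum, ← mul_sum, hKraus, mul_one, trace_rho_eq_one hortho hp1]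

lemma star_psiTilde0_dotProduct_psiT
    (hortho : ∀ i j, star (ψ i) ⬝ᵥ ψ j = if i = j then (1 : ℂ) else 0)
    (hp : ∀ i, 0 ≤ p i) (hp1 : ∑ i, p i = 1) (hV0 : IsUnit (V 0)) :
    star (PsiTilde0 ψ p V) ⬝ᵥ PsiT ψ p V = 1 := by
  rw [psiTilde0_eq_sum_sum, PsiT,
    star_sum_tvec_dotProduct_sum_tvec hortho star_stdv_dotProduct_stdv]
  simp only [apply_ite star, star_zero, ite_mul, zero_mul, sum_ite_eq', mem_univ, if_true]
  rw [← trace_rho_mul_conjTranspose_mul hp, conjTranspose_nonsing_inv,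
    conjTranspose_conjTranspose, nonsing_inv_mul _ ((isUnit_iff_isUnit_det _).mp hV0), mul_one,
    trace_rho_eq_one hortho hp1]

lemma star_psiTilde0_dotProduct_psiTilde0
    (hortho : ∀ i j, star (ψ i) ⬝ᵥ ψ j = if i = j then (1 : ℂ) else 0)
    (hp : ∀ i, 0 ≤ p i) :
    star (PsiTilde0 ψ p V) ⬝ᵥ PsiTilde0 ψ p V = (rho ψ p * ((V 0)ᴴ * V 0)⁻¹).trace := by
  rw [psiTilde0_eq_sum_sum, star_sum_tvec_dotProduct_sum_tvec hortho star_stdv_dotProduct_stdv]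
  simp only [apply_ite star, star_zero, ite_mul, zero_mul, mul_ite, mul_zero, sum_ite_eq',
    mem_univ, if_true]
  rw [← trace_rho_mul_conjTranspose_mul hp, Matrix.mul_inv_rev, conjTranspose_nonsing_inv,
    conjTranspose_conjTranspose]

end States

theorem general_mean_bound_general
    (ψ : Fin n → Fin n → ℂ)
    (hortho : ∀ i j, star (ψ i) ⬝ᵥ ψ j = if i = j then (1 : ℂ) else 0)
    (p : Fin n → ℝ) (hp : ∀ i, 0 ≤ p i) (hp1 : ∑ i, p i = 1)
    (V : Fin (M + 1) → Matrix (Fin n) (Fin n) ℂ)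
    (hKraus : ∑ m, (V m)ᴴ * V m = 1)
    (hV0 : IsUnit (V 0))
    (G : Matrix ((Fin n × Fin n) × Fin (M + 1)) ((Fin n × Fin n) × Fin (M + 1)) ℂ)
    (gmax : ℝ)
    (hgmax : ∀ x : (Fin n × Fin n) × Fin (M + 1) → ℂ,
      Real.sqrt (∑ k, ‖(G *ᵥ x) k‖ ^ 2)
        ≤ gmax * Real.sqrt (∑ k, ‖x k‖ ^ 2)) :
    noCostBaseline ψ p V G - Real.sqrt (gmax ^ 2 * survivalActivity ψ p V)
        ≤ expval G (PsiT ψ p V) ∧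
      expval G (PsiT ψ p V)
        ≤ noCostBaseline ψ p V G + Real.sqrt (gmax ^ 2 * survivalActivity ψ p V) := by
  have hΨ : ‖WithLp.toLp 2 (PsiT ψ p V)‖ = 1 := by
    rw [← pow_eq_one_iff_of_nonneg (norm_nonneg _) two_ne_zero, EuclideanSpace.norm_toLp_sq,
      star_psiT_dotProduct_psiT hortho hp hp1 hKraus, RCLike.one_re]
  have hΨ₀ :
      RCLike.re (inner ℂ (WithLp.toLp 2 (PsiTilde0 ψ p V)) (WithLp.toLp 2 (PsiT ψ p V))) = 1 := by
    rw [EuclideanSpace.inner_toLp_toLp_eq_star_dotProduct,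
      star_psiTilde0_dotProduct_psiT hortho hp hp1 hV0, RCLike.one_re]
  have hGΨ : ‖WithLp.toLp 2 (G *ᵥ PsiT ψ p V)‖ ≤ gmax := by
    simpa only [← EuclideanSpace.norm_toLp, hΨ, mul_one] using hgmax (PsiT ψ p V)
  have hΞ : survivalActivity ψ p V = ‖WithLp.toLp 2 (PsiTilde0 ψ p V)‖ ^ 2 - 1 := by
    rw [EuclideanSpace.norm_toLp_sq, star_psiTilde0_dotProduct_psiTilde0 hortho hp]
    rfl
  have hmean := abs_re_inner_sub_re_inner_le hΨ hΨ₀ hGΨ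
  rw [EuclideanSpace.inner_toLp_toLp_eq_star_dotProduct,
    EuclideanSpace.inner_toLp_toLp_eq_star_dotProduct, ← hΞ] at hmean
  change |expval G (PsiT ψ p V) - noCostBaseline ψ p V G| ≤ _ at hmean
  rw [abs_sub_le_iff] at hmean
  constructor <;> linarith [hmean.1, hmean.2]

/-- **General mean bound.** -/
theorem general_mean_bound
    (ψ : Fin n → Fin n → ℂ)
    (hortho : ∀ i j, star (ψ i) ⬝ᵥ ψ j = if i = j then (1 : ℂ) else 0)
    (p : Fin n → ℝ) (hp : ∀ i, 0 ≤ p i) (hp1 : ∑ i, p i = 1)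
    (V : Fin (M + 1) → Matrix (Fin n) (Fin n) ℂ)
    (hKraus : ∑ m, (V m)ᴴ * V m = 1)
    (hV0 : IsUnit (V 0))
    (G : Matrix ((Fin n × Fin n) × Fin (M + 1)) ((Fin n × Fin n) × Fin (M + 1)) ℂ)
    (hG : G.IsHermitian)
    (gmax : ℝ) (hgmax0 : 0 ≤ gmax)
    (hgmax : ∀ x : (Fin n × Fin n) × Fin (M + 1) → ℂ,
      Real.sqrt (∑ k, ‖(G *ᵥ x) k‖ ^ 2)
        ≤ gmax * Real.sqrt (∑ k, ‖x k‖ ^ 2)) :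
    noCostBaseline ψ p V G - Real.sqrt (gmax ^ 2 * survivalActivity ψ p V)
        ≤ expval G (PsiT ψ p V) ∧
      expval G (PsiT ψ p V)
        ≤ noCostBaseline ψ p V G + Real.sqrt (gmax ^ 2 * survivalActivity ψ p V) :=
  general_mean_bound_general ψ hortho p hp hp1 V hKraus hV0 G gmax hgmax
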